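/- Let M be a finitely generated, finitely supported ℤ^n-graded module over R = k[X_1,…,X_n]. Then there exist s ∈ ℕ and degrees α_1,…,α_s ∈ ℤ^n together with an injective ℤ^n-graded R-module homomorphism M ↪ ⊕_{i=1}^s Σ^{α_i} E(k), where E(k) = k[X_1^{-1},…,X_n^{-1}] is the graded injective hull of k. Moreover, choosing generators of M of degrees β_1,…,β_t, there is a graded homomorphism φ : ⊕_{j=1}^t Σ^{β_j} R → ⊕_{i=1}^s Σ^{α_i} E(k) with im φ ≅ M (a flat-injective presentation of M). -/

import Mathlib

/-- Inclusion `ℕ^n ↪ ℤ^n` of exponent vectors. -/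
noncomputable def expZ {n : ℕ} (γ : Fin n →₀ ℕ) : Fin n →₀ ℤ :=
  Finsupp.mapRange (Int.ofNat) (by simp) γ

/-- The underlying type of the graded injective hull `E(k) = k[X_1⁻¹, …, X_n⁻¹]`:
a Laurent polynomial `∑ c_γ X^{-γ}` with `γ ∈ ℕ^n` is recorded as the finitely supported
function `γ ↦ c_γ`. -/
def Ek (k : Type*) [Field k] (n : ℕ) : Type _ := (Fin n →₀ ℕ) →₀ k

noncomputable instance {k : Type*} [Field k] {n : ℕ} : AddCommGroup (Ek k n) :=
  inferInstanceAs (AddCommGroup ((Fin n →₀ ℕ) →₀ k))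

noncomputable instance {k : Type*} [Field k] {n : ℕ} : Module k (Ek k n) :=
  inferInstanceAs (Module k ((Fin n →₀ ℕ) →₀ k))

/-- The support of an element of `E(k)`: the set of `γ ∈ ℕ^n` such that the coefficient of
`X^{-γ}` is nonzero. -/
def Ek.support {k : Type*} [Field k] {n : ℕ} (f : Ek k n) : Finset (Fin n →₀ ℕ) :=
  Finsupp.support (show (Fin n →₀ ℕ) →₀ k from f)

/-- The action of the monomial `X^δ` on `E(k)`: `X^δ · X^{-γ'} = X^{-(γ'-δ)}` if `δ ≤ γ'`,
and `0` otherwise; i.e. the coefficient of `X^{-γ}` in `X^δ • f` is that of `X^{-(γ+δ)}`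
in `f`. -/
noncomputable def shiftEnd {k : Type*} [Field k] {n : ℕ} (δ : Fin n →₀ ℕ) :
    Module.End k ((Fin n →₀ ℕ) →₀ k) :=
  Finsupp.lcomapDomain (fun γ => γ + δ) (fun _ _ h => add_right_cancel h)

lemma shiftEnd_apply {k : Type*} [Field k] {n : ℕ} (δ : Fin n →₀ ℕ)
    (f : (Fin n →₀ ℕ) →₀ k) (γ : Fin n →₀ ℕ) : shiftEnd δ f γ = f (γ + δ) := rfl

/-- The multiplicative-monoid morphism sending `X^δ` to the shift operator. -/
noncomputable def shiftHom (k : Type*) [Field k] (n : ℕ) :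
    Multiplicative (Fin n →₀ ℕ) →* Module.End k ((Fin n →₀ ℕ) →₀ k) where
  toFun δ := shiftEnd (Multiplicative.toAdd δ)
  map_one' := LinearMap.ext fun f => Finsupp.ext fun γ => by
    simp [shiftEnd_apply]
  map_mul' δ ε := LinearMap.ext fun f => Finsupp.ext fun γ => by
    simp [Module.End.mul_apply, shiftEnd_apply, add_assoc]

/-- The action of `R = k[X_1, …, X_n]` on `E(k)`, as a ring morphism into endomorphisms. -/
noncomputable def EkRingHom (k : Type*) [Field k] (n : ℕ) :
    MvPolynomial (Fin n) k →+* Module.End k ((Fin n →₀ ℕ) →₀ k) :=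
  (AddMonoidAlgebra.lift k (Module.End k ((Fin n →₀ ℕ) →₀ k)) (Fin n →₀ ℕ)
    (shiftHom k n)).toRingHom

/-- The `R`-module structure on `E(k)`. -/
noncomputable instance {k : Type*} [Field k] {n : ℕ} :
    Module (MvPolynomial (Fin n) k) (Ek k n) :=
  Module.compHom ((Fin n →₀ ℕ) →₀ k) (EkRingHom k n)

/-- Homogeneity in `E(k)` shifted so that the basis element `X^{-c}` has degree `-c`:
`f` is homogeneous of degree `γ ∈ ℤ^n` iff its support consists of exponent vectors `c`
with `-c = γ`. -/
def Ek.homog {k : Type*} [Field k] {n : ℕ} (γ : Fin n →₀ ℤ) (f : Ek k n) : Prop :=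
  ∀ c ∈ Ek.support f, expZ c = -γ

/-!
Since `X^γ` maps `M_β` into `M_{β+γ}` and only finitely many `M_β` are nonzero, every element
of `M` is killed by all but finitely many monomials; hence a finitely generated `M` is
finite-dimensional over `k`. A `k`-linear functional `l` on `M` induces the `R`-linear map
`m ↦ ∑_γ l(X^γ m) X^{-γ}` into `E(k)`, whose `X^0`-coefficient is `l m`, and which is homogeneous
of degree `-α` when `l` vanishes on every `M_β` with `β ≠ α`. The coordinate functionals of a
basis of `M` made of bases of the `M_β` therefore give the embedding
`M ↪ ⊕ Σ^{α_i} E(k)`; composing it with the surjection `⊕_j Σ^{β_j} R → M`, `e_j ↦ g_j`, gives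
the flat-injective presentation.
-/

open MvPolynomial

section

variable {k : Type*} [Field k] {n : ℕ}

lemma expZ_injective : Function.Injective (expZ (n := n)) :=
  Finsupp.mapRange_injective Int.ofNat rfl fun _ _ => Int.ofNat.inj

/-- `Ek.coeff f γ` is the coefficient of `X^{-γ}` in `f`. -/
noncomputable def Ek.coeff : Ek k n ≃ₗ[k] ((Fin n →₀ ℕ) →₀ k) := LinearEquiv.refl k _

lemma Ek.coeff_monomial_smul (u : Fin n →₀ ℕ) (a : k) (f : Ek k n) (γ : Fin n →₀ ℕ) :
    Ek.coeff (monomial u a • f) γ = a * Ek.coeff f (γ + u) := by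
  change (AddMonoidAlgebra.lift k _ _ (shiftHom k n) (AddMonoidAlgebra.single u a) f) γ = _
  rw [AddMonoidAlgebra.lift_single]
  simp only [shiftHom, MonoidHom.coe_mk, OneHom.coe_mk, toAdd_ofAdd]
  rfl

section Separation

variable {M : Type*} [AddCommGroup M] [Module k M]

theorem exists_homogeneous_separating_functionals [FiniteDimensional k M] {ι : Type*}
    [DecidableEq ι] (𝓜 : ι → Submodule k M) (hdir : DirectSum.IsInternal 𝓜) :
    ∃ (s : ℕ) (α : Fin s → ι) (l : Fin s → M →ₗ[k] k),
      (∀ i, ∀ β ≠ α i, ∀ m ∈ 𝓜 β, l i m = 0) ∧ ∀ m, (∀ i, l i m = 0) → m = 0 := by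
  let b := hdir.collectedBasis fun β => Module.Free.chooseBasis k (𝓜 β)
  have := Module.Finite.finite_basis b
  let e := Finite.equivFin (Σ β, Module.Free.ChooseBasisIndex k (𝓜 β))
  refine ⟨_, fun i => (e.symm i).1, fun i => b.coord (e.symm i), ?_, ?_⟩
  · intro i β hβ m hm
    exact hdir.collectedBasis_repr_of_mem_ne _ hβ hm
  · intro m hm
    exact b.forall_coord_eq_zero_iff.1 fun x => by simpa using hm (e x)

end Separation

section Graded

variable {M : Type*} [AddCommGroup M] [Module (MvPolynomial (Fin n) k) M] [Module k M]

theorem Module.Finite.of_finite_monomial_smul_ne_zero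
    [IsScalarTower k (MvPolynomial (Fin n) k) M] [Module.Finite (MvPolynomial (Fin n) k) M]
    (hfin : ∀ m : M, {γ : Fin n →₀ ℕ | monomial γ (1 : k) • m ≠ 0}.Finite) :
    Module.Finite k M := by
  obtain ⟨G, hG⟩ := Module.Finite.fg_top (R := MvPolynomial (Fin n) k) (M := M)
  let S := ⋃ g ∈ G,
    (fun γ => monomial γ (1 : k) • g) '' {γ : Fin n →₀ ℕ | monomial γ (1 : k) • g ≠ 0}
  have hS : S.Finite := G.finite_toSet.biUnion fun g _ => (hfin g).image _
  have hmonomials :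
      Submodule.span k (Set.range fun γ : Fin n →₀ ℕ => monomial γ (1 : k)) = ⊤ := by
    simpa [coe_basisMonomials] using (basisMonomials (Fin n) k).span_eq
  refine ⟨Submodule.fg_def.2 ⟨S, hS, eq_top_iff.2 fun x _ => ?_⟩⟩
  have hx : x ∈ (Submodule.span (MvPolynomial (Fin n) k) (G : Set M)).restrictScalars k := by
    simp [hG]
  rw [← Submodule.span_smul_of_span_eq_top hmonomials] at hx
  refine Submodule.span_le.2 ?_ hx
  rintro _ ⟨_, ⟨γ, rfl⟩, g, hg, rfl⟩
  by_cases h0 : monomial γ (1 : k) • g = 0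
  · simp [h0]
  · exact Submodule.subset_span (Set.mem_biUnion hg ⟨γ, h0, rfl⟩)

variable (𝓜 : (Fin n →₀ ℤ) → Submodule k M)

theorem finite_setOf_monomial_smul_ne_zero
    (hmul : ∀ (γ : Fin n →₀ ℕ) (c : k) (β : Fin n →₀ ℤ) (m : M),
      m ∈ 𝓜 β → (MvPolynomial.monomial γ c) • m ∈ 𝓜 (β + expZ γ))
    (htop : iSup 𝓜 = ⊤)
    (hsupp : {β : Fin n →₀ ℤ | 𝓜 β ≠ ⊥}.Finite) (m : M) :
    {γ : Fin n →₀ ℕ | monomial γ (1 : k) • m ≠ 0}.Finite := by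
  have hhomog : ∀ β, ∀ m ∈ 𝓜 β, {γ : Fin n →₀ ℕ | monomial γ (1 : k) • m ≠ 0}.Finite := by
    intro β m hm
    have hinj : Function.Injective fun γ => β + expZ γ :=
      (add_right_injective β).comp expZ_injective
    refine (hsupp.preimage hinj.injOn).subset fun γ hγ hbot => hγ ?_
    simpa [hbot] using hmul γ 1 β m hm
  refine Submodule.iSup_induction 𝓜
    (motive := fun m => {γ : Fin n →₀ ℕ | monomial γ (1 : k) • m ≠ 0}.Finite)
    (htop ▸ Submodule.mem_top) hhomog (by simp) fun x y hx hy => (hx.union hy).subset ?_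
  intro γ hγ
  by_contra hxy
  rw [Set.mem_union, not_or] at hxy
  exact hγ (by rw [smul_add, of_not_not hxy.1, of_not_not hxy.2, add_zero])

lemma smul_mem_of_forall_mem_support
    (hmul : ∀ (γ : Fin n →₀ ℕ) (c : k) (β : Fin n →₀ ℤ) (m : M),
      m ∈ 𝓜 β → (MvPolynomial.monomial γ c) • m ∈ 𝓜 (β + expZ γ))
    {p : MvPolynomial (Fin n) k} {β γ : Fin n →₀ ℤ} {m : M} (hm : m ∈ 𝓜 β)
    (hp : ∀ u ∈ p.support, expZ u = γ - β) : p • m ∈ 𝓜 γ := by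
  rw [p.as_sum, Finset.sum_smul]
  refine Submodule.sum_mem _ fun u hu => ?_
  simpa [hp u hu] using hmul u (coeff u p) β m hm

lemma monomial_smul_eq_smul_monomial_one_smul [IsScalarTower k (MvPolynomial (Fin n) k) M]
    (u : Fin n →₀ ℕ) (a : k) (m : M) : monomial u a • m = a • (monomial u (1 : k) • m) := by
  rw [← smul_assoc, smul_monomial, smul_eq_mul, mul_one]

noncomputable def Ek.ofFunctional [IsScalarTower k (MvPolynomial (Fin n) k) M]
    (hfin : ∀ m : M, {γ : Fin n →₀ ℕ | monomial γ (1 : k) • m ≠ 0}.Finite) (l : M →ₗ[k] k) :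
    M →ₗ[MvPolynomial (Fin n) k] Ek k n where
  toFun m := Ek.coeff.symm <| Finsupp.ofSupportFinite (fun γ => l (monomial γ (1 : k) • m))
    ((hfin m).subset fun γ hγ h0 => hγ (by simp [h0]))
  map_add' m m' := Ek.coeff.injective <| Finsupp.ext fun γ => by
    simp [Finsupp.ofSupportFinite_coe, smul_add]
  map_smul' p m := by
    induction p using MvPolynomial.induction_on' with
    | monomial u a =>
      refine Ek.coeff.injective <| Finsupp.ext fun γ => ?_
      simp [Finsupp.ofSupportFinite_coe, Ek.coeff_monomial_smul, smul_smul, monomial_mul,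
        monomial_smul_eq_smul_monomial_one_smul (γ + u) a]
    | add p q hp hq =>
      rw [RingHom.id_apply] at hp hq ⊢
      rw [add_smul, add_smul, ← hp, ← hq]
      exact Ek.coeff.injective <| Finsupp.ext fun γ => by
        simp [Finsupp.ofSupportFinite_coe, smul_add]

variable [IsScalarTower k (MvPolynomial (Fin n) k) M]
  {hfin : ∀ m : M, {γ : Fin n →₀ ℕ | monomial γ (1 : k) • m ≠ 0}.Finite}

@[simp]
lemma Ek.coeff_ofFunctional (l : M →ₗ[k] k) (m : M) (γ : Fin n →₀ ℕ) :
    Ek.coeff (Ek.ofFunctional hfin l m) γ = l (monomial γ (1 : k) • m) :=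
  rfl

lemma Ek.homog_ofFunctional
    (hmul : ∀ (γ : Fin n →₀ ℕ) (c : k) (β : Fin n →₀ ℤ) (m : M),
      m ∈ 𝓜 β → (MvPolynomial.monomial γ c) • m ∈ 𝓜 (β + expZ γ))
    {l : M →ₗ[k] k} {α : Fin n →₀ ℤ} (hl : ∀ β ≠ α, ∀ m ∈ 𝓜 β, l m = 0)
    {γ : Fin n →₀ ℤ} {m : M} (hm : m ∈ 𝓜 γ) :
    Ek.homog (γ - α) (Ek.ofFunctional hfin l m) := by
  intro c hc
  have hdeg : γ + expZ c = α := by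
    by_contra hne
    exact (Finsupp.mem_support_iff.1 hc) (hl _ hne _ (hmul c 1 γ m hm))
  rw [← hdeg]
  abel

end Graded

theorem exists_injective_graded_hom_pi_Ek {M : Type*} [AddCommGroup M]
    [Module (MvPolynomial (Fin n) k) M] [Module k M]
    [IsScalarTower k (MvPolynomial (Fin n) k) M]
    (𝓜 : (Fin n →₀ ℤ) → Submodule k M)
    (hdir : DirectSum.IsInternal 𝓜)
    (hmul : ∀ (γ : Fin n →₀ ℕ) (c : k) (β : Fin n →₀ ℤ) (m : M),
      m ∈ 𝓜 β → (MvPolynomial.monomial γ c) • m ∈ 𝓜 (β + expZ γ))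
    [Module.Finite (MvPolynomial (Fin n) k) M]
    (hsupp : {β : Fin n →₀ ℤ | 𝓜 β ≠ ⊥}.Finite) :
    ∃ (s : ℕ) (α : Fin s → (Fin n →₀ ℤ))
        (ι : M →ₗ[MvPolynomial (Fin n) k] (Fin s → Ek k n)),
      Function.Injective ι ∧
        ∀ (γ : Fin n →₀ ℤ) (m : M), m ∈ 𝓜 γ → ∀ i, Ek.homog (γ - α i) (ι m i) := by
  have hfin := finite_setOf_monomial_smul_ne_zero 𝓜 hmul hdir.submodule_iSup_eq_top hsupp
  have := Module.Finite.of_finite_monomial_smul_ne_zero hfin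
  obtain ⟨s, α, l, hl, hsep⟩ := exists_homogeneous_separating_functionals 𝓜 hdir
  refine ⟨s, α, LinearMap.pi fun i => Ek.ofFunctional hfin (l i), ?_,
    fun γ m hm i => Ek.homog_ofFunctional 𝓜 (hfin := hfin) hmul (hl i) hm⟩
  refine (injective_iff_map_eq_zero _).2 fun m hm => hsep m fun i => ?_
  simpa using congr(Ek.coeff ($hm i) 0)

end

/-- Every finitely generated, finitely supported `ℤ^n`-graded module `M` over
`R = k[X_1, …, X_n]` embeds, via an injective graded `R`-homomorphism, into a finite direct
sum `⊕_i Σ^{α_i} E(k)` of shifted copies of the graded injective hull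
`E(k) = k[X_1⁻¹, …, X_n⁻¹]` of `k`; and for any chosen homogeneous generators of `M` of
degrees `β_1, …, β_t` there is a graded homomorphism
`φ : ⊕_j Σ^{β_j} R → ⊕_i Σ^{α_i} E(k)` with `im φ ≅ M` (a flat-injective presentation). -/
theorem exists_flat_injective_presentation {k : Type*} [Field k] {n : ℕ}
    {M : Type*} [AddCommGroup M]
    [Module (MvPolynomial (Fin n) k) M] [Module k M]
    [IsScalarTower k (MvPolynomial (Fin n) k) M]
    (𝓜 : (Fin n →₀ ℤ) → Submodule k M)
    (hdir : DirectSum.IsInternal 𝓜)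
    (hmul : ∀ (γ : Fin n →₀ ℕ) (c : k) (β : Fin n →₀ ℤ) (m : M),
      m ∈ 𝓜 β → (MvPolynomial.monomial γ c) • m ∈ 𝓜 (β + expZ γ))
    (hfg : Module.Finite (MvPolynomial (Fin n) k) M)
    (hsupp : {β : Fin n →₀ ℤ | 𝓜 β ≠ ⊥}.Finite) :
    (∃ (s : ℕ) (α : Fin s → (Fin n →₀ ℤ))
        (ι : M →ₗ[MvPolynomial (Fin n) k] (Fin s → Ek k n)),
      Function.Injective ι ∧
        ∀ (γ : Fin n →₀ ℤ) (m : M), m ∈ 𝓜 γ → ∀ i, Ek.homog (γ - α i) (ι m i)) ∧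
    ∀ (t : ℕ) (β : Fin t → (Fin n →₀ ℤ)) (g : Fin t → M),
      (∀ j, g j ∈ 𝓜 (β j)) →
      Submodule.span (MvPolynomial (Fin n) k) (Set.range g) = ⊤ →
      ∃ (s : ℕ) (α : Fin s → (Fin n →₀ ℤ))
        (φ : (Fin t → MvPolynomial (Fin n) k) →ₗ[MvPolynomial (Fin n) k]
          (Fin s → Ek k n)),
        (∀ (γ : Fin n →₀ ℤ) (v : Fin t → MvPolynomial (Fin n) k),
          (∀ j, ∀ m ∈ (v j).support, expZ m = γ - β j) →
          ∀ i, Ek.homog (γ - α i) (φ v i)) ∧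
        Nonempty ((LinearMap.range φ) ≃ₗ[MvPolynomial (Fin n) k] M) := by
  obtain ⟨s, α, ι, hinj, hhomog⟩ := exists_injective_graded_hom_pi_Ek 𝓜 hdir hmul hsupp
  refine ⟨⟨s, α, ι, hinj, hhomog⟩, fun t β g hg hspan => ?_⟩
  let π := Fintype.linearCombination (MvPolynomial (Fin n) k) g
  have hπ : LinearMap.range π = ⊤ := by rw [Fintype.range_linearCombination, hspan]
  refine ⟨s, α, ι ∘ₗ π, fun γ v hv => hhomog γ (π v) ?_, ?_⟩
  · rw [Fintype.linearCombination_apply]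
    exact Submodule.sum_mem _ fun j _ => smul_mem_of_forall_mem_support 𝓜 hmul (hg j) (hv j)
  · rw [LinearMap.range_comp_of_range_eq_top ι hπ]
    exact ⟨(LinearEquiv.ofInjective ι hinj).symm⟩
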